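/- Let n ≥ 4 be an even integer and let n₁ be an integer with 1 ≤ n₁ ≤ n/2. Let Γ_{n,n₁} be the graph obtained from the cocktail party graph CP_n by adding n₁ of the n/2 missing edges. Then the characteristic polynomial of the Laplacian matrix L(Γ_{n,n₁}) equals x · (x − (n−2))^{n/2 − n₁} · (x − n)^{(n/2 + n₁) − 1}. -/

import Mathlib

/-- The graph `Γ_{n,n₁}` on `Fin n`: the complete graph `K_n` with the edges
`{i, i + n/2}` for `n₁ ≤ i < n/2` deleted. For `n₁ = 0` this is the cocktail party
graph `CP_n`, and for `1 ≤ n₁ ≤ n/2` it is obtained from `CP_n` by adding `n₁` of the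
`n/2` missing edges. -/
def gammaGraph (n n₁ : ℕ) : SimpleGraph (Fin n) where
  Adj i j := i ≠ j ∧ ¬ ∃ k : ℕ, n₁ ≤ k ∧ k < n / 2 ∧
      (((i : ℕ) = k ∧ (j : ℕ) = k + n / 2) ∨ ((j : ℕ) = k ∧ (i : ℕ) = k + n / 2))
  symm := ⟨fun _ _ ⟨h1, h2⟩ =>
    ⟨h1.symm, fun ⟨k, hk1, hk2, hor⟩ => h2 ⟨k, hk1, hk2, hor.symm⟩⟩⟩
  loopless := ⟨fun _ h => h.1 rfl⟩

noncomputable instance (n n₁ : ℕ) : DecidableRel (gammaGraph n n₁).Adj :=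
  fun _ _ => Classical.dec _

/-!
Split `Fin (2m)` into the halves `i < m` and `i ≥ m`. In these coordinates the adjacency matrix of
`Γ_{2m,n₁}` is `[[J - I, J - D], [J - D, J - I]]`, where `J` is the all-ones matrix and `D` is the
diagonal indicator of the `m - n₁` deleted edges `{i, i + m}`. The Laplacian then has the symmetric
block form `[[A, B], [B, A]]`, whose characteristic polynomial is `χ(A + B) χ(A - B)`. Here
`A + B = 2m I - 2J` has eigenvalues `0` and `2m` (with multiplicity `m - 1`), and
`A - B = 2m I - 2D` is diagonal.
-/

open Polynomial Matrix Finset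

namespace Matrix

section Laplacian

variable {α β R : Type*} [Fintype α] [DecidableEq α] [Fintype β] [DecidableEq β] [Ring R]

def laplacian (M : Matrix α α R) : Matrix α α R :=
  diagonal (M *ᵥ 1) - M

theorem laplacian_add (M N : Matrix α α R) : laplacian (M + N) = laplacian M + laplacian N := by
  simp only [laplacian, add_mulVec, ← diagonalAddMonoidHom_apply, map_add]
  abel

theorem laplacian_sub (M N : Matrix α α R) : laplacian (M - N) = laplacian M - laplacian N := by
  simp only [laplacian, sub_mulVec, ← diagonalAddMonoidHom_apply, map_sub]
  abel

theorem laplacian_diagonal (d : α → R) : laplacian (diagonal d) = 0 := by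
  ext i j
  by_cases h : i = j
  · subst h
    simp [laplacian, mulVec_diagonal]
  · simp [laplacian, h]

theorem laplacian_of_one :
    laplacian (of 1 : Matrix α α R) = scalar α (Fintype.card α : R) - of 1 := by
  have h : (of 1 : Matrix α α R) *ᵥ 1 = fun _ => (Fintype.card α : R) := by
    ext
    simp [mulVec, dotProduct]
  rw [laplacian, h, scalar_apply]

theorem laplacian_reindex (e : α ≃ β) (M : Matrix α α R) :
    laplacian (reindex e e M) = reindex e e (laplacian M) := by
  simp [laplacian, submatrix_mulVec_equiv, submatrix_sub, submatrix_diagonal_equiv]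

theorem laplacian_fromBlocks_self (P Q : Matrix α α R) :
    laplacian (fromBlocks P Q Q P) =
      fromBlocks (laplacian (P + Q) + Q) (-Q) (-Q) (laplacian (P + Q) + Q) := by
  have hinl : (1 : α ⊕ α → R) ∘ Sum.inl = 1 := rfl
  have hinr : (1 : α ⊕ α → R) ∘ Sum.inr = 1 := rfl
  rw [laplacian, fromBlocks_mulVec, hinl, hinr, add_comm (Q *ᵥ 1), ← add_mulVec,
    ← fromBlocks_diagonal, sub_eq_add_neg, fromBlocks_neg, fromBlocks_add]
  simp only [laplacian, zero_add]
  congr 1 <;> abel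

end Laplacian

section Charpoly

variable {α R : Type*} [Fintype α] [DecidableEq α] [CommRing R]

theorem det_fromBlocks_self (A B : Matrix α α R) :
    (fromBlocks A B B A).det = (A + B).det * (A - B).det := by
  have h : fromBlocks A B B A =
      fromBlocks 1 1 0 1 * fromBlocks (A - B) 0 B (A + B) * fromBlocks 1 (-1) 0 1 := by
    simp only [fromBlocks_multiply]
    congr 1 <;> noncomm_ring
  simp [h, det_fromBlocks_zero₁₂, mul_comm]

theorem charpoly_fromBlocks_self (A B : Matrix α α R) :
    (fromBlocks A B B A).charpoly = (A + B).charpoly * (A - B).charpoly := by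
  rw [charpoly, charmatrix_fromBlocks, det_fromBlocks_self, charpoly, charpoly]
  simp only [charmatrix, map_add, map_sub, RingHom.mapMatrix_apply]
  congr 2 <;> abel

theorem charpoly_scalar_add_vecMulVec [Nonempty α] (a : R) (u v : α → R) :
    (scalar α a + vecMulVec u v).charpoly =
      (X - C (a + u ⬝ᵥ v)) * (X - C a) ^ (Fintype.card α - 1) := by
  have hshift := charpoly_sub_scalar (vecMulVec u v) (-a)
  rw [map_neg, sub_neg_eq_add, add_comm] at hshift
  obtain ⟨k, hk⟩ : ∃ k, Fintype.card α = k + 1 := ⟨_, (Nat.sub_add_cancel Fintype.card_pos).symm⟩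
  rw [hshift, charpoly_vecMulVec, hk, Nat.add_sub_cancel]
  simp only [sub_comp, pow_comp, X_comp, smul_eq_C_mul, mul_comp, C_comp, map_add, map_neg]
  ring

end Charpoly

end Matrix

theorem SimpleGraph.lapMatrix_eq_laplacian_adjMatrix {V R : Type*} [Fintype V] [DecidableEq V]
    [Ring R] (G : SimpleGraph V) [DecidableRel G.Adj] :
    G.lapMatrix R = laplacian (G.adjMatrix R) := by
  ext i j
  simp [SimpleGraph.lapMatrix, SimpleGraph.degMatrix, laplacian, diagonal_apply]

theorem Fin.prod_univ_ite_le_val {M : Type*} [CommMonoid M] {m k : ℕ} (h : k ≤ m) (f g : M) :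
    ∏ i : Fin m, (if k ≤ (i : ℕ) then f else g) = f ^ (m - k) * g ^ k := by
  have hlt : #{i : Fin m | (i : ℕ) < k} = k := by
    rw [Fin.card_filter_val_lt]
    omega
  have hle : #{i : Fin m | k ≤ (i : ℕ)} = m - k := by
    have := card_filter_add_card_filter_not (s := univ) (fun i : Fin m => k ≤ (i : ℕ))
    simp only [not_le, hlt, card_univ, Fintype.card_fin] at this
    omega
  rw [prod_ite, Finset.prod_const, Finset.prod_const, hle]
  simp only [not_le, hlt]

theorem gammaGraph_adj_iff {m n₁ : ℕ} {i j : Fin (m + m)} :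
    (gammaGraph (m + m) n₁).Adj i j ↔
      i ≠ j ∧ ¬ ((n₁ ≤ i ∧ (j : ℕ) = i + m) ∨ (n₁ ≤ j ∧ (i : ℕ) = j + m)) := by
  have hm : (m + m) / 2 = m := by omega
  simp only [gammaGraph, hm]
  refine and_congr_right fun _ => not_congr ⟨?_, ?_⟩
  · rintro ⟨k, hk, -, ⟨hi, hj⟩ | ⟨hj, hi⟩⟩
    · exact Or.inl ⟨hi ▸ hk, by omega⟩
    · exact Or.inr ⟨hj ▸ hk, by omega⟩
  · rintro (⟨h, hj⟩ | ⟨h, hi⟩)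
    · exact ⟨i, h, by omega, Or.inl ⟨rfl, hj⟩⟩
    · exact ⟨j, h, by omega, Or.inr ⟨rfl, hi⟩⟩

theorem reindex_adjMatrix_gammaGraph (R : Type*) [Ring R] (m n₁ : ℕ) :
    reindex finSumFinEquiv.symm finSumFinEquiv.symm ((gammaGraph (m + m) n₁).adjMatrix R) =
      let D : Matrix (Fin m) (Fin m) R := diagonal fun i => if n₁ ≤ (i : ℕ) then 1 else 0
      fromBlocks (of 1 - 1) (of 1 - D) (of 1 - D) (of 1 - 1) := by
  ext (i | i) (j | j) <;>
    simp [SimpleGraph.adjMatrix_apply, gammaGraph_adj_iff, one_apply, diagonal_apply, Fin.ext_iff]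
    <;> split_ifs <;> first | omega | simp

theorem charpoly_lapMatrix_gammaGraph_eq_mul (R : Type*) [CommRing R] (m n₁ : ℕ) :
    ((gammaGraph (m + m) n₁).lapMatrix R).charpoly =
      (scalar (Fin m) ((m + m : ℕ) : R) + vecMulVec (fun _ => -2) 1).charpoly *
        (diagonal fun i : Fin m =>
          if n₁ ≤ (i : ℕ) then ((m + m : ℕ) : R) - 2 else ((m + m : ℕ) : R)).charpoly := by
  set D : Matrix (Fin m) (Fin m) R := diagonal fun i => if n₁ ≤ (i : ℕ) then 1 else 0
  have hsum : laplacian (of 1 - 1 + (of 1 - D)) =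
      scalar (Fin m) ((m + m : ℕ) : R) + vecMulVec (fun _ => -2) 1 := by
    rw [laplacian_add, laplacian_sub, laplacian_sub, ← diagonal_one, laplacian_diagonal,
      laplacian_diagonal, laplacian_of_one]
    ext i j
    by_cases h : i = j <;> simp [h, Matrix.natCast_apply] <;> ring
  have hdiff : laplacian (of 1 - 1 + (of 1 - D)) + (of 1 - D) + (of 1 - D) =
      diagonal fun i : Fin m =>
        if n₁ ≤ (i : ℕ) then ((m + m : ℕ) : R) - 2 else ((m + m : ℕ) : R) := by
    rw [hsum]
    ext i j
    by_cases h : i = j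
    · subst h
      by_cases hi : n₁ ≤ (i : ℕ) <;> simp [D, hi] <;> ring
    · simp [h, D]
      norm_num
  rw [← charpoly_reindex finSumFinEquiv.symm, SimpleGraph.lapMatrix_eq_laplacian_adjMatrix,
    ← laplacian_reindex, reindex_adjMatrix_gammaGraph, laplacian_fromBlocks_self,
    charpoly_fromBlocks_self, add_neg_cancel_right, sub_neg_eq_add, hdiff, hsum]

open Polynomial in
theorem charpoly_lapMatrix_gammaGraph_general (n n₁ : ℕ) (hn : 4 ≤ n) (hev : Even n)
    (h2 : n₁ ≤ n / 2) :
    (SimpleGraph.lapMatrix ℝ (gammaGraph n n₁)).charpoly =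
      X * (X - C ((n : ℝ) - 2)) ^ (n / 2 - n₁) * (X - C (n : ℝ)) ^ (n / 2 + n₁ - 1) := by
  obtain ⟨m, rfl⟩ := hev
  have hm : (m + m) / 2 = m := by omega
  have : Nonempty (Fin m) := ⟨⟨0, by omega⟩⟩
  have hdot : (fun _ => (-2 : ℝ)) ⬝ᵥ (1 : Fin m → ℝ) = -((m + m : ℕ) : ℝ) := by
    simp [dotProduct]
    ring
  rw [hm] at h2 ⊢
  rw [charpoly_lapMatrix_gammaGraph_eq_mul, charpoly_scalar_add_vecMulVec, charpoly_diagonal]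
  simp only [apply_ite (fun r : ℝ => X - C r), Fin.prod_univ_ite_le_val h2, hdot, add_neg_cancel,
    map_zero, sub_zero, Fintype.card_fin]
  rw [show m + n₁ - 1 = m - 1 + n₁ by omega, pow_add]
  ring

open Polynomial in
/-- The characteristic polynomial of the Laplacian matrix of `Γ_{n,n₁}` (the cocktail
party graph `CP_n` with `n₁` of its missing edges added, `1 ≤ n₁ ≤ n/2`) is
`x (x - (n-2))^{n/2 - n₁} (x - n)^{(n/2 + n₁) - 1}`. -/
theorem charpoly_lapMatrix_gammaGraph (n n₁ : ℕ) (hn : 4 ≤ n) (hev : Even n)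
    (h1 : 1 ≤ n₁) (h2 : n₁ ≤ n / 2) :
    (SimpleGraph.lapMatrix ℝ (gammaGraph n n₁)).charpoly =
      X * (X - C ((n : ℝ) - 2)) ^ (n / 2 - n₁) * (X - C (n : ℝ)) ^ (n / 2 + n₁ - 1) :=
  charpoly_lapMatrix_gammaGraph_general n n₁ hn hev h2
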